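/- arXiv:2111.05478 — 5 statements merged into one kernel-verified Lean document; each statement's English description precedes it below -/
import Mathlib

section
/- Let E be a real normed vector space, let L ≥ 0 and α ≥ 0 with α·L < 1, let k ≥ 1, and let g₁, …, g_{k-1} : E → E each satisfy ‖gᵢ(W₁) - gᵢ(W₂)‖ ≤ L·‖W₁ - W₂‖ for all W₁, W₂ ∈ E. Suppose (Wᵢ)_{i=1}^{k} and (Vᵢ)_{i=1}^{k} are sequences in E with W_{i+1} = Wᵢ - α·gᵢ(Wᵢ) and V_{i+1} = Vᵢ - α·gᵢ(Vᵢ) for every 1 ≤ i ≤ k-1, and that W_k = V_k. Then Wᵢ = Vᵢ for every 1 ≤ i ≤ k; in particular W₁ = V₁. -/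
/-! Each SGD step `x ↦ x - α • gᵢ x` perturbs the identity by an `αL`-Lipschitz map with
`αL < 1`, so it is injective: if two points have the same image, their distance is at most
`αL` times itself, hence zero. Two trajectories that agree at step `k` therefore agree at every
earlier step, by backward induction. -/

open Function

theorem injective_id_sub_of_norm_sub_le_mul {E : Type*} [NormedAddCommGroup E] {h : E → E}
    {K : ℝ} (hK : K < 1) (hh : ∀ x y, ‖h x - h y‖ ≤ K * ‖x - y‖) :
    Injective fun x ↦ x - h x := by
  intro x y hxy
  have hdiff : x - y = h x - h y := by
    rw [sub_eq_sub_iff_sub_eq_sub]; exact hxy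
  have hle : ‖x - y‖ ≤ K * ‖x - y‖ := hdiff ▸ hh x y
  have hzero : ‖x - y‖ = 0 := by nlinarith [norm_nonneg (x - y)]
  exact sub_eq_zero.mp (norm_eq_zero.mp hzero)

theorem norm_smul_sub_smul_le_mul {E : Type*} [SeminormedAddCommGroup E] [NormedSpace ℝ E]
    {g : E → E} {α L : ℝ} (hα : 0 ≤ α) (hg : ∀ x y, ‖g x - g y‖ ≤ L * ‖x - y‖) (x y : E) :
    ‖α • g x - α • g y‖ ≤ α * L * ‖x - y‖ := by
  calc ‖α • g x - α • g y‖ = α * ‖g x - g y‖ := by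
        rw [← smul_sub, norm_smul, Real.norm_of_nonneg hα]
    _ ≤ α * (L * ‖x - y‖) := mul_le_mul_of_nonneg_left (hg x y) hα
    _ = α * L * ‖x - y‖ := by ring

theorem eq_of_eq_of_injective_step {X : Type*} {T : ℕ → X → X} {W V : ℕ → X} {m k : ℕ}
    (hT : ∀ i, m ≤ i → i < k → Injective (T i))
    (hW : ∀ i, m ≤ i → i < k → W (i + 1) = T i (W i))
    (hV : ∀ i, m ≤ i → i < k → V (i + 1) = T i (V i))
    (hend : W k = V k) :
    ∀ i, m ≤ i → i ≤ k → W i = V i := by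
  intro i hmi hik
  refine Nat.decreasingInduction' (P := fun j ↦ W j = V j) (fun j hjk hij hnext ↦ ?_) hik hend
  have hmj : m ≤ j := hmi.trans hij
  exact hT j hmj hjk (by rw [← hW j hmj hjk, ← hV j hmj hjk]; exact hnext)

theorem sgd_trajectory_reversible_general {E : Type*} [NormedAddCommGroup E] [NormedSpace ℝ E]
    (L α : ℝ) (hα : 0 ≤ α) (hαL : α * L < 1)
    (k : ℕ) (g : ℕ → E → E)
    (hg : ∀ i, 1 ≤ i → i ≤ k - 1 → ∀ W₁ W₂ : E, ‖g i W₁ - g i W₂‖ ≤ L * ‖W₁ - W₂‖)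
    (W V : ℕ → E)
    (hW : ∀ i, 1 ≤ i → i ≤ k - 1 → W (i + 1) = W i - α • g i (W i))
    (hV : ∀ i, 1 ≤ i → i ≤ k - 1 → V (i + 1) = V i - α • g i (V i))
    (hend : W k = V k) :
    ∀ i, 1 ≤ i → i ≤ k → W i = V i := by
  refine eq_of_eq_of_injective_step (T := fun i x ↦ x - α • g i x)
    (fun i h1 hik ↦ ?_) (fun i h1 hik ↦ hW i h1 (by omega)) (fun i h1 hik ↦ hV i h1 (by omega)) hend
  exact injective_id_sub_of_norm_sub_le_mul hαL
    (norm_smul_sub_smul_le_mul hα (hg i h1 (by omega)))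

/-- Reversibility of an SGD trajectory: with step size `α < 1/L` and each
`gᵢ` being `L`-Lipschitz, the whole model sequence is determined by the final
model and the batch gradients. -/
theorem sgd_trajectory_reversible {E : Type*} [NormedAddCommGroup E] [NormedSpace ℝ E]
    (L α : ℝ) (hL : 0 ≤ L) (hα : 0 ≤ α) (hαL : α * L < 1)
    (k : ℕ) (hk : 1 ≤ k) (g : ℕ → E → E)
    (hg : ∀ i, 1 ≤ i → i ≤ k - 1 → ∀ W₁ W₂ : E, ‖g i W₁ - g i W₂‖ ≤ L * ‖W₁ - W₂‖)
    (W V : ℕ → E)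
    (hW : ∀ i, 1 ≤ i → i ≤ k - 1 → W (i + 1) = W i - α • g i (W i))
    (hV : ∀ i, 1 ≤ i → i ≤ k - 1 → V (i + 1) = V i - α • g i (V i))
    (hend : W k = V k) :
    ∀ i, 1 ≤ i → i ≤ k → W i = V i :=
  sgd_trajectory_reversible_general L α hα hαL k g hg W V hW hV hend
end

section
/- Let p, γ ∈ [0,1] and q ∈ (0,1) satisfy p·γ ≤ q and (1-p)·γ ≤ 1-q. Then q·h(pγ/q) + (1-q)·h((1-p)γ/(1-q)) ≤ h(γ) - γ·D(p‖q). -/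
/-- Binary entropy (base-2 logarithm); note `Real.logb 2 0 = 0`, so the
convention `0·log₂ 0 = 0` holds automatically. -/
noncomputable def binEnt (p : ℝ) : ℝ := -p * Real.logb 2 p - (1 - p) * Real.logb 2 (1 - p)

/-- Bernoulli KL-divergence (base-2 logarithm); the convention
`0·log₂(0/q) = 0` holds automatically since `Real.logb 2 0 = 0`. -/
noncomputable def bernKL (p q : ℝ) : ℝ :=
  p * Real.logb 2 (p / q) + (1 - p) * Real.logb 2 ((1 - p) / (1 - q))

private lemma key1 (c γ q : ℝ) (hc : 0 ≤ c) (hγ : 0 ≤ γ) (hq : q ≠ 0) :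
    (c * γ) * Real.log (c * γ / q) = c * γ * Real.log γ + γ * (c * Real.log (c / q)) := by
  rcases eq_or_lt_of_le hc with hc0 | hc0
  · simp [← hc0]
  rcases eq_or_lt_of_le hγ with hγ0 | hγ0
  · simp [← hγ0]
  have h1 : Real.log (c * γ / q) = Real.log c + Real.log γ - Real.log q := by
    rw [Real.log_div (by positivity) hq, Real.log_mul (ne_of_gt hc0) (ne_of_gt hγ0)]
  have h2 : Real.log (c / q) = Real.log c - Real.log q := Real.log_div (ne_of_gt hc0) hq
  rw [h1, h2]; ring

private lemma logsum (x y q : ℝ) (hx : 0 ≤ x) (hy : 0 ≤ y) (hq : 0 < q) (hq1 : q < 1) :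
    (x + y) * Real.log (x + y) ≤ x * Real.log (x / q) + y * Real.log (y / (1 - q)) := by
  have hq' : (0:ℝ) < 1 - q := by linarith
  rcases eq_or_lt_of_le hx with hx0 | hx0
  · rcases eq_or_lt_of_le hy with hy0 | hy0
    · simp [← hx0, ← hy0]
    · have : Real.log y ≤ Real.log (y / (1 - q)) := by
        rw [Real.log_div (ne_of_gt hy0) (ne_of_gt hq')]
        have : Real.log (1 - q) ≤ 0 := Real.log_nonpos (by linarith) (by linarith)
        linarith
      have := mul_le_mul_of_nonneg_left this hy
      simp only [← hx0] at *
      simpa using this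
  rcases eq_or_lt_of_le hy with hy0 | hy0
  · have : Real.log x ≤ Real.log (x / q) := by
      rw [Real.log_div (ne_of_gt hx0) (ne_of_gt hq)]
      have : Real.log q ≤ 0 := Real.log_nonpos (by linarith) (by linarith)
      linarith
    have := mul_le_mul_of_nonneg_left this hx
    simp only [← hy0] at *
    simpa using this
  -- both positive
  have hs : 0 < x + y := by linarith
  have b1 : Real.log (q * (x + y) / x) ≤ q * (x + y) / x - 1 :=
    Real.log_le_sub_one_of_pos (by positivity)
  have b2 : Real.log ((1 - q) * (x + y) / y) ≤ (1 - q) * (x + y) / y - 1 :=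
    Real.log_le_sub_one_of_pos (by positivity)
  have e1 : Real.log (q * (x + y) / x) = Real.log q + Real.log (x + y) - Real.log x := by
    rw [Real.log_div (by positivity) (ne_of_gt hx0),
      Real.log_mul (ne_of_gt hq) (ne_of_gt hs)]
  have e2 : Real.log ((1 - q) * (x + y) / y)
      = Real.log (1 - q) + Real.log (x + y) - Real.log y := by
    rw [Real.log_div (by positivity) (ne_of_gt hy0),
      Real.log_mul (ne_of_gt hq') (ne_of_gt hs)]
  have f1 : Real.log (x / q) = Real.log x - Real.log q :=
    Real.log_div (ne_of_gt hx0) (ne_of_gt hq)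
  have f2 : Real.log (y / (1 - q)) = Real.log y - Real.log (1 - q) :=
    Real.log_div (ne_of_gt hy0) (ne_of_gt hq')
  have c1 : x * Real.log (q * (x + y) / x) ≤ q * (x + y) - x := by
    have := mul_le_mul_of_nonneg_left b1 hx
    have hxne : x ≠ 0 := ne_of_gt hx0
    calc x * Real.log (q * (x + y) / x) ≤ x * (q * (x + y) / x - 1) := this
      _ = q * (x + y) - x := by field_simp
  have c2 : y * Real.log ((1 - q) * (x + y) / y) ≤ (1 - q) * (x + y) - y := by
    have := mul_le_mul_of_nonneg_left b2 hy
    have hyne : y ≠ 0 := ne_of_gt hy0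
    calc y * Real.log ((1 - q) * (x + y) / y) ≤ y * ((1 - q) * (x + y) / y - 1) := this
      _ = (1 - q) * (x + y) - y := by field_simp
  rw [e1] at c1
  rw [e2] at c2
  rw [f1, f2]
  nlinarith [c1, c2]

private lemma binEnt_eq (t : ℝ) :
    binEnt t = (-t * Real.log t - (1 - t) * Real.log (1 - t)) / Real.log 2 := by
  unfold binEnt Real.logb; ring

private lemma bernKL_eq (p q : ℝ) :
    bernKL p q = (p * Real.log (p / q) + (1 - p) * Real.log ((1 - p) / (1 - q))) / Real.log 2 := by
  unfold bernKL Real.logb; ring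

/-- Lemma 2.4 of the paper. -/
theorem entropy_formula (p γ q : ℝ) (hp0 : 0 ≤ p) (hp1 : p ≤ 1)
    (hγ0 : 0 ≤ γ) (hγ1 : γ ≤ 1) (hq0 : 0 < q) (hq1 : q < 1)
    (h1 : p * γ ≤ q) (h2 : (1 - p) * γ ≤ 1 - q) :
    q * binEnt (p * γ / q) + (1 - q) * binEnt ((1 - p) * γ / (1 - q))
      ≤ binEnt γ - γ * bernKL p q := by
  have hq' : (0:ℝ) < 1 - q := by linarith
  have hqne : q ≠ 0 := ne_of_gt hq0
  have hq'ne : (1 - q) ≠ 0 := ne_of_gt hq'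
  have hL : (0:ℝ) < Real.log 2 := Real.log_pos (by norm_num)
  -- natural-log version
  have main : q * (-(p * γ / q) * Real.log (p * γ / q)
        - (1 - p * γ / q) * Real.log (1 - p * γ / q))
      + (1 - q) * (-((1 - p) * γ / (1 - q)) * Real.log ((1 - p) * γ / (1 - q))
        - (1 - (1 - p) * γ / (1 - q)) * Real.log (1 - (1 - p) * γ / (1 - q)))
      ≤ (-γ * Real.log γ - (1 - γ) * Real.log (1 - γ))
        - γ * (p * Real.log (p / q) + (1 - p) * Real.log ((1 - p) / (1 - q))) := by
    have rw1 : 1 - p * γ / q = (q - p * γ) / q := by field_simp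
    have rw2 : 1 - (1 - p) * γ / (1 - q) = ((1 - q) - (1 - p) * γ) / (1 - q) := by
      field_simp
    have E1 : q * (-(p * γ / q) * Real.log (p * γ / q)
          - (1 - p * γ / q) * Real.log (1 - p * γ / q))
        = -(p * γ) * Real.log (p * γ / q)
          - (q - p * γ) * Real.log ((q - p * γ) / q) := by
      rw [rw1]; field_simp
    have E2 : (1 - q) * (-((1 - p) * γ / (1 - q)) * Real.log ((1 - p) * γ / (1 - q))
          - (1 - (1 - p) * γ / (1 - q)) * Real.log (1 - (1 - p) * γ / (1 - q)))
        = -((1 - p) * γ) * Real.log ((1 - p) * γ / (1 - q))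
          - ((1 - q) - (1 - p) * γ) * Real.log (((1 - q) - (1 - p) * γ) / (1 - q)) := by
      rw [rw2]; field_simp
    have K1 := key1 p γ q hp0 hγ0 hqne
    have K2 := key1 (1 - p) γ (1 - q) (by linarith) hγ0 hq'ne
    have LS := logsum (q - p * γ) ((1 - q) - (1 - p) * γ) q
      (by linarith) (by linarith) hq0 hq1
    have hxy : (q - p * γ) + ((1 - q) - (1 - p) * γ) = 1 - γ := by ring
    rw [hxy] at LS
    rw [E1, E2]
    nlinarith [K1, K2, LS]
  rw [binEnt_eq, binEnt_eq, binEnt_eq, bernKL_eq]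
  calc q * ((-(p * γ / q) * Real.log (p * γ / q)
          - (1 - p * γ / q) * Real.log (1 - p * γ / q)) / Real.log 2)
        + (1 - q) * ((-((1 - p) * γ / (1 - q)) * Real.log ((1 - p) * γ / (1 - q))
          - (1 - (1 - p) * γ / (1 - q)) * Real.log (1 - (1 - p) * γ / (1 - q))) / Real.log 2)
      = (q * (-(p * γ / q) * Real.log (p * γ / q)
          - (1 - p * γ / q) * Real.log (1 - p * γ / q))
        + (1 - q) * (-((1 - p) * γ / (1 - q)) * Real.log ((1 - p) * γ / (1 - q))
          - (1 - (1 - p) * γ / (1 - q)) * Real.log (1 - (1 - p) * γ / (1 - q)))) / Real.log 2 := by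
        ring
    _ ≤ ((-γ * Real.log γ - (1 - γ) * Real.log (1 - γ))
        - γ * (p * Real.log (p / q) + (1 - p) * Real.log ((1 - p) / (1 - q)))) / Real.log 2 := by
        gcongr
    _ = (-γ * Real.log γ - (1 - γ) * Real.log (1 - γ)) / Real.log 2
        - γ * ((p * Real.log (p / q) + (1 - p) * Real.log ((1 - p) / (1 - q))) / Real.log 2) := by
        ring
end

section
/- Let m, B₁, B₀, b₁, b₀ be natural numbers with m > 0, B₁ + B₀ = m, b₁ ≤ B₁, b₀ ≤ B₀ and b₁ + b₀ > 0. Set γ = (b₁ + b₀)/m, κ_B = B₁/m, and κ_A = b₁/(b₁ + b₀). Then log₂(C(B₁, b₁)) + log₂(C(B₀, b₀)) ≤ m·(h(γ) - 2·γ·(κ_B - κ_A)²), where C(n,k) denotes the binomial coefficient. -/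
lemma nat_pow_bound (n k : ℕ) (h : k ≤ n) :
    n.choose k * k ^ k * (n - k) ^ (n - k) ≤ n ^ n := by
  calc n.choose k * k ^ k * (n - k) ^ (n - k)
      = k ^ k * (n - k) ^ (n - k) * n.choose k := by ring
    _ ≤ ∑ i ∈ Finset.range (n + 1), k ^ i * (n - k) ^ (n - i) * n.choose i := by
        apply Finset.single_le_sum (f := fun i => k ^ i * (n - k) ^ (n - i) * n.choose i)
        · intro i _; positivity
        · simpa using Nat.lt_succ_of_le h
    _ = (k + (n - k)) ^ n := (add_pow k (n-k) n).symm
    _ = n ^ n := by rw [Nat.add_sub_cancel' h]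

lemma log_choose_le (n k : ℕ) (h : k ≤ n) :
    Real.log (n.choose k) ≤ n * Real.log n - k * Real.log k
      - ((n : ℝ) - k) * Real.log ((n : ℝ) - k) := by
  have hc : (0:ℝ) < n.choose k := by exact_mod_cast Nat.choose_pos h
  have hpow : ∀ x : ℕ, (0:ℝ) < (x:ℝ) ^ x := by
    intro x
    rcases Nat.eq_zero_or_pos x with hx | hx
    · simp [hx]
    · have : (0:ℝ) < (x:ℝ) := by exact_mod_cast hx
      positivity
  have hkk : (0:ℝ) < (k:ℝ) ^ k := hpow k
  have hnk : (0:ℝ) < ((n - k : ℕ):ℝ) ^ (n - k) := hpow (n - k)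
  have hcast : ((n - k : ℕ):ℝ) = (n:ℝ) - k := Nat.cast_sub h
  have hmain : (n.choose k : ℝ) * (k:ℝ) ^ k * ((n-k:ℕ):ℝ) ^ (n-k) ≤ (n:ℝ) ^ n := by
    exact_mod_cast nat_pow_bound n k h
  have hlog := Real.log_le_log (by positivity) hmain
  rw [Real.log_mul (by positivity) hnk.ne', Real.log_mul hc.ne' hkk.ne',
    Real.log_pow, Real.log_pow, Real.log_pow] at hlog
  have h1 : ((n - k : ℕ):ℝ) * Real.log ((n-k:ℕ):ℝ) = ((n:ℝ) - k) * Real.log ((n:ℝ) - k) := by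
    rw [hcast]
  push_cast at hlog h1 ⊢
  linarith

lemma mono_aux {f f' : ℝ → ℝ} {s t : ℝ} (hst : s ≤ t)
    (hC : ContinuousOn f (Set.Icc s t))
    (hd : ∀ x ∈ Set.Ioo s t, HasDerivAt f (f' x) x)
    (h0 : ∀ x ∈ Set.Ioo s t, 0 ≤ f' x) : f s ≤ f t := by
  have hmono : MonotoneOn f (Set.Icc s t) := by
    apply monotoneOn_of_deriv_nonneg (convex_Icc s t) hC
    · intro x hx
      rw [interior_Icc] at hx
      exact (hd x hx).differentiableAt.differentiableWithinAt
    · intro x hx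
      rw [interior_Icc] at hx
      rw [(hd x hx).deriv]
      exact h0 x hx
  exact hmono (Set.left_mem_Icc.2 hst) (Set.right_mem_Icc.2 hst) hst

lemma anti_aux {f f' : ℝ → ℝ} {s t : ℝ} (hst : s ≤ t)
    (hC : ContinuousOn f (Set.Icc s t))
    (hd : ∀ x ∈ Set.Ioo s t, HasDerivAt f (f' x) x)
    (h0 : ∀ x ∈ Set.Ioo s t, f' x ≤ 0) : f t ≤ f s := by
  have h := mono_aux (f := fun x => -f x) (f' := fun x => -f' x) hst
    hC.neg (fun x hx => (hd x hx).neg) (fun x hx => by simpa using h0 x hx)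
  simp only [neg_le_neg_iff] at h
  exact h

lemma pinsker_deriv (a : ℝ) {x : ℝ} (hx0 : 0 < x) (hx1 : x < 1) :
    HasDerivAt (fun y => a * Real.log a + (1-a) * Real.log (1-a)
        - a * Real.log y - (1-a) * Real.log (1-y) - 2*(a-y)^2)
      ((x - a) * (2*x - 1)^2 / (x * (1-x))) x := by
  have hxne : x ≠ 0 := hx0.ne'
  have h1xne : (1:ℝ) - x ≠ 0 := by linarith
  have h1 : HasDerivAt (fun y : ℝ => a * Real.log y) (a * x⁻¹) x :=
    (Real.hasDerivAt_log hxne).const_mul a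
  have h2i : HasDerivAt (fun y : ℝ => 1 - y) (-1) x := (hasDerivAt_id x).const_sub 1
  have h2 : HasDerivAt (fun y : ℝ => (1-a) * Real.log (1-y)) ((1-a) * (-1 / (1-x))) x :=
    (h2i.log h1xne).const_mul (1-a)
  have h3i : HasDerivAt (fun y : ℝ => a - y) (-1) x := (hasDerivAt_id x).const_sub a
  have h3 : HasDerivAt (fun y : ℝ => 2*(a-y)^2) (2 * (2 * (a-x)^1 * (-1))) x :=
    (h3i.pow 2).const_mul 2
  have := (((hasDerivAt_const x (a * Real.log a + (1-a) * Real.log (1-a))).sub h1).sub h2).sub h3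
  refine HasDerivAt.congr_deriv this ?_
  field_simp
  ring

lemma pinsker0_deriv {x : ℝ} (hx1 : x < 1) :
    HasDerivAt (fun y => -Real.log (1-y) - 2*y^2) ((2*x-1)^2 / (1-x)) x := by
  have h1xne : (1:ℝ) - x ≠ 0 := by linarith
  have h2i : HasDerivAt (fun y : ℝ => 1 - y) (-1) x := (hasDerivAt_id x).const_sub 1
  have h2 : HasDerivAt (fun y : ℝ => -Real.log (1-y)) (-(-1 / (1-x))) x :=
    (h2i.log h1xne).neg
  have h3 : HasDerivAt (fun y : ℝ => 2*y^2) (2 * (2*x^1)) x :=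
    (hasDerivAt_pow 2 x).const_mul 2
  have := h2.sub h3
  refine HasDerivAt.congr_deriv this ?_
  field_simp
  ring

lemma pinsker1_deriv {x : ℝ} (hx0 : 0 < x) :
    HasDerivAt (fun y => -Real.log y - 2*(1-y)^2) (-((2*x-1)^2 / x)) x := by
  have h1 : HasDerivAt (fun y : ℝ => -Real.log y) (-x⁻¹) x :=
    (Real.hasDerivAt_log hx0.ne').neg
  have h3i : HasDerivAt (fun y : ℝ => 1 - y) (-1) x := (hasDerivAt_id x).const_sub 1
  have h3 : HasDerivAt (fun y : ℝ => 2*(1-y)^2) (2 * (2 * (1-x)^1 * (-1))) x :=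
    (h3i.pow 2).const_mul 2
  have := h1.sub h3
  refine HasDerivAt.congr_deriv this ?_
  field_simp
  ring

lemma pinsker (a p : ℝ) (ha0 : 0 ≤ a) (ha1 : a ≤ 1) (hp0 : 0 < p) (hp1 : p < 1) :
    2*(a-p)^2 ≤ a * Real.log a + (1-a) * Real.log (1-a)
      - a * Real.log p - (1-a) * Real.log (1-p) := by
  rcases eq_or_lt_of_le ha0 with rfl | ha0'
  · -- a = 0 : show 2*p^2 ≤ -log (1-p)
    have key := mono_aux (f := fun y : ℝ => -Real.log (1-y) - 2*y^2)
      (f' := fun x => (2*x-1)^2 / (1-x)) hp0.le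
      (by
        apply ContinuousOn.sub
        · apply ContinuousOn.neg
          apply Real.continuousOn_log.comp (by fun_prop)
          intro x hx
          simp only [Set.mem_Icc] at hx
          simp only [Set.mem_compl_iff, Set.mem_singleton_iff]
          intro hc; linarith [hx.2, hc]
        · fun_prop)
      (fun x hx => pinsker0_deriv (by rcases Set.mem_Ioo.1 hx with ⟨_, h2⟩; linarith))
      (fun x hx => by
        rcases Set.mem_Ioo.1 hx with ⟨h1, h2⟩
        have : (0:ℝ) < 1 - x := by linarith
        positivity)
    norm_num [Real.log_one] at key ⊢
    linarith
  rcases eq_or_lt_of_le ha1 with rfl | ha1'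
  · -- a = 1 : show 2*(1-p)^2 ≤ -log p
    have key := anti_aux (f := fun y : ℝ => -Real.log y - 2*(1-y)^2)
      (f' := fun x => -((2*x-1)^2 / x)) hp1.le (t := 1)
      (by
        apply ContinuousOn.sub
        · apply ContinuousOn.neg
          apply Real.continuousOn_log.comp (by fun_prop)
          intro x hx
          simp only [Set.mem_Icc] at hx
          simp only [Set.mem_compl_iff, Set.mem_singleton_iff]
          intro hc; linarith [hx.1, hp0, hc]
        · fun_prop)
      (fun x hx => pinsker1_deriv (by rcases Set.mem_Ioo.1 hx with ⟨h1, _⟩; linarith))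
      (fun x hx => by
        rcases Set.mem_Ioo.1 hx with ⟨h1, h2⟩
        have hx0 : (0:ℝ) < x := by linarith
        have : (0:ℝ) ≤ (2*x-1)^2 / x := by positivity
        linarith)
    norm_num [Real.log_one] at key ⊢
    linarith
  -- 0 < a < 1
  set f : ℝ → ℝ := fun y => a * Real.log a + (1-a) * Real.log (1-a)
      - a * Real.log y - (1-a) * Real.log (1-y) - 2*(a-y)^2 with hf
  have hfa : f a = 0 := by simp only [hf]; ring
  have hcont : ∀ s t : ℝ, 0 < s → t < 1 → ContinuousOn f (Set.Icc s t) := by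
    intro s t hs ht x hx
    simp only [Set.mem_Icc] at hx
    apply ContinuousAt.continuousWithinAt
    have hx0 : 0 < x := lt_of_lt_of_le hs hx.1
    have hx1 : x < 1 := lt_of_le_of_lt hx.2 ht
    exact (pinsker_deriv a hx0 hx1).continuousAt
  have goal : 0 ≤ f p := by
    rcases lt_trichotomy a p with hap | hap | hap
    · rw [← hfa]
      apply mono_aux (f' := fun x => (x - a) * (2*x-1)^2 / (x * (1-x))) hap.le
        (hcont a p ha0' hp1)
      · intro x hx
        rcases Set.mem_Ioo.1 hx with ⟨h1, h2⟩
        exact pinsker_deriv a (lt_trans ha0' h1) (lt_trans h2 hp1)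
      · intro x hx
        rcases Set.mem_Ioo.1 hx with ⟨h1, h2⟩
        have hx1 : (0:ℝ) < 1 - x := by linarith [lt_trans h2 hp1]
        have hx0 : (0:ℝ) < x := lt_trans ha0' h1
        have hxa : (0:ℝ) ≤ x - a := by linarith
        positivity
    · rw [← hap, hfa]
    · rw [← hfa]
      apply anti_aux (f' := fun x => (x - a) * (2*x-1)^2 / (x * (1-x))) hap.le
        (hcont p a hp0 ha1')
      · intro x hx
        rcases Set.mem_Ioo.1 hx with ⟨h1, h2⟩
        exact pinsker_deriv a (lt_trans hp0 h1) (lt_trans h2 ha1')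
      · intro x hx
        rcases Set.mem_Ioo.1 hx with ⟨h1, h2⟩
        have hx0 : (0:ℝ) < x := lt_trans hp0 h1
        have hx1 : (0:ℝ) < 1 - x := by linarith [lt_trans h2 ha1']
        have hnum : (x - a) * (2*x-1)^2 ≤ 0 := by
          apply mul_nonpos_of_nonpos_of_nonneg
          · linarith
          · positivity
        exact div_nonpos_of_nonpos_of_nonneg hnum (by positivity)
  simp only [hf] at goal
  linarith

lemma xlog (x y : ℝ) (hx : 0 ≤ x) (hy : 0 < y) :
    y * ((x/y) * Real.log (x/y)) = x * Real.log x - x * Real.log y := by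
  rcases eq_or_lt_of_le hx with rfl | hx'
  · simp
  · rw [Real.log_div hx'.ne' hy.ne']
    field_simp

lemma ent_expand (N s : ℝ) (hs : 0 ≤ s) (hsN : s ≤ N) (hN : 0 < N) :
    N * ((-(s/N) * Real.logb 2 (s/N) - (1 - s/N) * Real.logb 2 (1 - s/N))) * Real.log 2
      = N * Real.log N - s * Real.log s - (N - s) * Real.log (N - s) := by
  have hlb : ∀ x : ℝ, Real.logb 2 x * Real.log 2 = Real.log x := fun x =>
    div_mul_cancel₀ _ (Real.log_pos one_lt_two).ne'
  have h1 : 1 - s/N = (N-s)/N := by field_simp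
  have e1 : N * ((s/N) * Real.log (s/N)) = s * Real.log s - s * Real.log N :=
    xlog s N hs hN
  have e2 : N * (((N-s)/N) * Real.log ((N-s)/N))
      = (N-s) * Real.log (N-s) - (N-s) * Real.log N := xlog (N-s) N (by linarith) hN
  calc N * ((-(s/N) * Real.logb 2 (s/N) - (1 - s/N) * Real.logb 2 (1 - s/N))) * Real.log 2
      = -(N * ((s/N) * (Real.logb 2 (s/N) * Real.log 2)))
        - N * (((N-s)/N) * (Real.logb 2 ((N-s)/N) * Real.log 2)) := by rw [h1]; ring
    _ = -(N * ((s/N) * Real.log (s/N))) - N * (((N-s)/N) * Real.log ((N-s)/N)) := by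
        rw [hlb, hlb]
    _ = N * Real.log N - s * Real.log s - (N - s) * Real.log (N - s) := by
        rw [e1, e2]; ring

lemma pinsker_applied (x y X Y : ℝ) (hx : 0 ≤ x) (hy : 0 ≤ y) (hX : 0 < X) (hY : 0 < Y)
    (hxy : 0 < x + y) :
    2 * Real.log 2 * (x + y) * (x/(x+y) - X/(X+Y))^2
      ≤ (x * Real.log x - x * Real.log (x+y)) + (y * Real.log y - y * Real.log (x+y))
        - (x * Real.log X - x * Real.log (X+Y)) - (y * Real.log Y - y * Real.log (X+Y)) := by
  have hXY : 0 < X + Y := by linarith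
  have ha0 : 0 ≤ x/(x+y) := by positivity
  have ha1 : x/(x+y) ≤ 1 := by rw [div_le_one hxy]; linarith
  have hp0 : 0 < X/(X+Y) := by positivity
  have hp1 : X/(X+Y) < 1 := by rw [div_lt_one hXY]; linarith
  have P := pinsker (x/(x+y)) (X/(X+Y)) ha0 ha1 hp0 hp1
  have h1a : 1 - x/(x+y) = y/(x+y) := by field_simp; ring
  have h1p : 1 - X/(X+Y) = Y/(X+Y) := by field_simp; ring
  rw [h1a, h1p] at P
  have key := mul_le_mul_of_nonneg_left P hxy.le
  have ea : (x+y) * ((x/(x+y)) * Real.log (x/(x+y)))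
      = x * Real.log x - x * Real.log (x+y) := xlog x (x+y) hx hxy
  have eb : (x+y) * ((y/(x+y)) * Real.log (y/(x+y)))
      = y * Real.log y - y * Real.log (x+y) := xlog y (x+y) hy hxy
  have ecX : Real.log (X/(X+Y)) = Real.log X - Real.log (X+Y) := Real.log_div hX.ne' hXY.ne'
  have ecY : Real.log (Y/(X+Y)) = Real.log Y - Real.log (X+Y) := Real.log_div hY.ne' hXY.ne'
  have hsx : (x+y) * (x/(x+y)) = x := by field_simp
  have hsy : (x+y) * (y/(x+y)) = y := by field_simp
  have ec' : (x+y) * ((x/(x+y)) * Real.log (X/(X+Y)))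
      = x * Real.log X - x * Real.log (X+Y) := by
    rw [ecX, show (x+y) * ((x/(x+y)) * (Real.log X - Real.log (X+Y)))
      = ((x+y) * (x/(x+y))) * (Real.log X - Real.log (X+Y)) from by ring, hsx]
    ring
  have ed' : (x+y) * ((y/(x+y)) * Real.log (Y/(X+Y)))
      = y * Real.log Y - y * Real.log (X+Y) := by
    rw [ecY, show (x+y) * ((y/(x+y)) * (Real.log Y - Real.log (X+Y)))
      = ((x+y) * (y/(x+y))) * (Real.log Y - Real.log (X+Y)) from by ring, hsy]
    ring
  have hlog2 : Real.log 2 ≤ 1 := by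
    have := Real.log_two_lt_d9; linarith
  have hsq : 0 ≤ (x+y) * (x/(x+y) - X/(X+Y))^2 := by positivity
  have hstep : 2 * Real.log 2 * (x + y) * (x/(x+y) - X/(X+Y))^2
      ≤ (x+y) * (2 * (x/(x+y) - X/(X+Y))^2) := by nlinarith [hsq, hlog2]
  have keyexp : (x+y) * ((x/(x+y)) * Real.log (x/(x+y)) + (y/(x+y)) * Real.log (y/(x+y))
      - (x/(x+y)) * Real.log (X/(X+Y)) - (y/(x+y)) * Real.log (Y/(X+Y)))
      = (x+y) * ((x/(x+y)) * Real.log (x/(x+y))) + (x+y) * ((y/(x+y)) * Real.log (y/(x+y)))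
      - (x+y) * ((x/(x+y)) * Real.log (X/(X+Y)))
      - (x+y) * ((y/(x+y)) * Real.log (Y/(X+Y))) := by ring
  rw [keyexp, ea, eb, ec', ed'] at key
  linarith [hstep, key]

lemma logb_choose_le (n k : ℕ) (hn : 0 < n) (hk : k ≤ n) :
    Real.logb 2 (n.choose k)
      ≤ (n:ℝ) * (-(((k:ℝ))/n) * Real.logb 2 ((k:ℝ)/n)
          - (1 - (k:ℝ)/n) * Real.logb 2 (1 - (k:ℝ)/n)) := by
  have hN : (0:ℝ) < n := by exact_mod_cast hn
  have hk' : (k:ℝ) ≤ n := by exact_mod_cast hk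
  have hk0 : (0:ℝ) ≤ k := by positivity
  rw [Real.logb, div_le_iff₀ (Real.log_pos one_lt_two)]
  rw [ent_expand (n:ℝ) (k:ℝ) hk0 hk' hN]
  exact log_choose_le n k hk


/-- The combinatorial core of Lemma 2.5 of the paper: counting the ways of
choosing `b₁` elements from `B₁` and `b₀` elements from `B₀`. -/
theorem choose_count_bound (m B₁ B₀ b₁ b₀ : ℕ) (hm : 0 < m) (hB : B₁ + B₀ = m)
    (h1 : b₁ ≤ B₁) (h0 : b₀ ≤ B₀) (hb : 0 < b₁ + b₀) :
    Real.logb 2 (Nat.choose B₁ b₁) + Real.logb 2 (Nat.choose B₀ b₀)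
      ≤ (m : ℝ) * (binEnt ((b₁ + b₀ : ℝ) / m)
          - 2 * ((b₁ + b₀ : ℝ) / m) * ((B₁ : ℝ) / m - (b₁ : ℝ) / (b₁ + b₀ : ℝ)) ^ 2) := by

  have hN : (0:ℝ) < m := by exact_mod_cast hm
  have hKL : (B₁:ℝ) + B₀ = m := by exact_mod_cast hB
  rcases Nat.eq_zero_or_pos B₁ with hB1 | hB1
  · obtain rfl : b₁ = 0 := by omega
    subst hB1
    obtain rfl : m = B₀ := by omega
    have key := logb_choose_le m b₀ hm h0
    simp only [binEnt, Nat.cast_zero, zero_add, zero_div, Nat.choose_self, Nat.cast_one,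
      Real.logb_one, sub_zero, zero_sub, neg_zero, even_two, Even.neg_pow, mul_zero,
      sub_self, ne_eq]
    norm_num
    -- remaining should match key
    linarith [key]
  rcases Nat.eq_zero_or_pos B₀ with hB0 | hB0
  · obtain rfl : b₀ = 0 := by omega
    subst hB0
    obtain rfl : m = B₁ := by omega
    have key := logb_choose_le m b₁ hm h1
    have hb1 : (0:ℝ) < b₁ := by exact_mod_cast hb
    have hd1 : (m:ℝ)/m = 1 := div_self hN.ne'
    have hd2 : (b₁:ℝ)/(b₁:ℝ) = 1 := div_self hb1.ne'
    simp only [binEnt, Nat.cast_zero, add_zero, Nat.choose_self, Nat.cast_one,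
      Real.logb_one, hd1, hd2, sub_self, ne_eq]
    norm_num
    linarith [key]
  rcases eq_or_lt_of_le (show b₁ + b₀ ≤ m by omega) with hsm | hsm
  · obtain rfl : b₁ = B₁ := by omega
    obtain rfl : b₀ = B₀ := by omega
    simp only [binEnt, Nat.choose_self, Nat.cast_one, Real.logb_one]
    rw [hKL, div_self hN.ne']
    norm_num [Real.logb_one]
  -- main case
  have hK : (0:ℝ) < B₁ := by exact_mod_cast hB1
  have hL : (0:ℝ) < B₀ := by exact_mod_cast hB0
  have hs : (0:ℝ) < (b₁:ℝ) + b₀ := by exact_mod_cast hb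
  have hsm' : ((b₁:ℝ) + b₀) < m := by exact_mod_cast hsm
  have hk0 : (0:ℝ) ≤ b₁ := by positivity
  have hl0 : (0:ℝ) ≤ b₀ := by positivity
  have hkK : (b₁:ℝ) ≤ B₁ := by exact_mod_cast h1
  have hlL : (b₀:ℝ) ≤ B₀ := by exact_mod_cast h0
  have C1 := log_choose_le B₁ b₁ h1
  have C2 := log_choose_le B₀ b₀ h0
  have PA1 := pinsker_applied (b₁:ℝ) (b₀:ℝ) (B₁:ℝ) (B₀:ℝ) hk0 hl0 hK hL hs
  rw [hKL] at PA1
  have PA2 := pinsker_applied ((B₁:ℝ) - b₁) ((B₀:ℝ) - b₀) (B₁:ℝ) (B₀:ℝ)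
    (by linarith) (by linarith) hK hL (by linarith)
  rw [show ((B₁:ℝ) - b₁ + ((B₀:ℝ) - b₀)) = (m:ℝ) - ((b₁:ℝ) + b₀) from by linarith,
    hKL] at PA2
  have PA2' : (0:ℝ) ≤ ((B₁:ℝ) - b₁) * Real.log ((B₁:ℝ) - b₁)
      - ((B₁:ℝ) - b₁) * Real.log ((m:ℝ) - ((b₁:ℝ) + b₀))
      + (((B₀:ℝ) - b₀) * Real.log ((B₀:ℝ) - b₀)
        - ((B₀:ℝ) - b₀) * Real.log ((m:ℝ) - ((b₁:ℝ) + b₀)))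
      - (((B₁:ℝ) - b₁) * Real.log (B₁:ℝ) - ((B₁:ℝ) - b₁) * Real.log (m:ℝ))
      - (((B₀:ℝ) - b₀) * Real.log (B₀:ℝ) - ((B₀:ℝ) - b₀) * Real.log (m:ℝ)) := by
    refine le_trans ?_ PA2
    have h2 : (0:ℝ) ≤ Real.log 2 := Real.log_nonneg one_le_two
    have h3 : (0:ℝ) ≤ (m:ℝ) - ((b₁:ℝ) + b₀) := by linarith
    exact mul_nonneg (mul_nonneg (by positivity) h3) (sq_nonneg _)
  have hent := ent_expand (m:ℝ) ((b₁:ℝ) + b₀) hs.le hsm'.le hN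
  have hgam : (m:ℝ) * (2 * (((b₁:ℝ) + b₀)/m) * (((B₁:ℝ)/m - (b₁:ℝ)/((b₁:ℝ) + b₀))^2))
      * Real.log 2
      = 2 * Real.log 2 * ((b₁:ℝ) + b₀) * (((B₁:ℝ)/m - (b₁:ℝ)/((b₁:ℝ) + b₀))^2) := by
    field_simp
  have hm1 : ((B₁:ℝ) + B₀) * Real.log ((m:ℝ) - ((b₁:ℝ) + b₀))
      = (m:ℝ) * Real.log ((m:ℝ) - ((b₁:ℝ) + b₀)) := by rw [hKL]
  have hm2 : ((B₁:ℝ) + B₀) * Real.log (m:ℝ) = (m:ℝ) * Real.log (m:ℝ) := by rw [hKL]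
  simp only [binEnt]
  rw [Real.logb, Real.logb, ← add_div, div_le_iff₀ (Real.log_pos one_lt_two)]
  linarith [C1, C2, PA1, PA2', hent, hgam, hm1, hm2]
end

section
/- Let n and b be positive integers with b dividing n, set m = n/b, and let β ∈ (0,1] satisfy β·m ≥ 60 (i.e., n ≥ 60b/β). Let j_s = ⌈βm/8⌉ + 1 and j_f = ⌊(1 - β/8)·m⌋ + 1. Let φ_j ∈ [0,1] for j ∈ {2,…,m+1}, acc_j ∈ [0,1] for j ∈ {1,…,m}, λ'_j ∈ [0,1] for j ∈ {2,…,m+1}, and λ''_j ∈ [0,1] for j ∈ {1,…,m}. Assume: (i) acc_j ≥ λ''_j - β/4 for every j ∈ {j_s,…,j_f - 1}; (ii) |λ'_j - λ''_j| ≤ β/4 for every j ∈ {j_s,…,j_f}; (iii) (b/n)·Σ_{j=2}^{m+1} (φ_j - acc_{j-1}) > β. Then Σ_{j=2}^{m+1} (φ_j - λ'_j)² ≥ n·β²/(25·b). -/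
set_option maxHeartbeats 1600000 in
/-- Deterministic core of Claim 3.4 of the paper: under the local-progress
assumption and closeness of accuracies on seen/unseen data, the sum of squared
accuracy gains over batches in an epoch is at least `nβ²/(25b)`. -/
theorem sum_of_squares_lb (n b : ℕ) (hn : 0 < n) (hb : 0 < b) (hdvd : b ∣ n)
    (m : ℕ) (hm : m = n / b)
    (β : ℝ) (hβ0 : 0 < β) (hβ1 : β ≤ 1) (hβm : 60 ≤ β * m)
    (js jf : ℕ) (hjs : js = ⌈β * m / 8⌉₊ + 1) (hjf : jf = ⌊(1 - β / 8) * m⌋₊ + 1)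
    (φ acc lam' lam'' : ℕ → ℝ)
    (hφ : ∀ j ∈ Finset.Icc 2 (m + 1), φ j ∈ Set.Icc (0 : ℝ) 1)
    (hacc : ∀ j ∈ Finset.Icc 1 m, acc j ∈ Set.Icc (0 : ℝ) 1)
    (hlam' : ∀ j ∈ Finset.Icc 2 (m + 1), lam' j ∈ Set.Icc (0 : ℝ) 1)
    (hlam'' : ∀ j ∈ Finset.Icc 1 m, lam'' j ∈ Set.Icc (0 : ℝ) 1)
    (hi : ∀ j ∈ Finset.Icc js (jf - 1), lam'' j - β / 4 ≤ acc j)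
    (hii : ∀ j ∈ Finset.Icc js jf, |lam' j - lam'' j| ≤ β / 4)
    (hiii : β < ((b : ℝ) / n) * ∑ j ∈ Finset.Icc 2 (m + 1), (φ j - acc (j - 1))) :
    (n : ℝ) * β ^ 2 / (25 * b) ≤ ∑ j ∈ Finset.Icc 2 (m + 1), (φ j - lam' j) ^ 2 := by
  have hb0 : (0:ℝ) < b := by exact_mod_cast hb
  have hnm : (n : ℝ) = (b : ℝ) * m := by
    have h : b * m = n := by rw [hm]; exact Nat.mul_div_cancel' hdvd
    rw [← h]; push_cast; ring
  have hmR : (60 : ℝ) ≤ (m : ℝ) := by nlinarith [Nat.cast_nonneg (α := ℝ) m]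
  have hmpos : (0:ℝ) < m := by linarith
  have hβmm : β * m ≤ (m:ℝ) := by nlinarith
  -- Step 1: total gain exceeds βm
  have hgain : β * m < ∑ j ∈ Finset.Icc 2 (m+1), (φ j - acc (j-1)) := by
    have h : ((b : ℝ) / n) * ∑ j ∈ Finset.Icc 2 (m + 1), (φ j - acc (j - 1))
        = (∑ j ∈ Finset.Icc 2 (m + 1), (φ j - acc (j - 1))) / m := by
      rw [hnm]; field_simp
    rw [h] at hiii
    exact (lt_div_iff₀ hmpos).mp hiii
  -- reindexing
  have hre : ∑ j ∈ Finset.Icc 2 (m+1), acc (j-1) = ∑ j ∈ Finset.Icc 1 m, acc j := by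
    have h1 : Finset.Icc 2 (m+1) = (Finset.Icc 1 m).map (addLeftEmbedding 1) := by
      rw [Finset.map_add_left_Icc]
      norm_num [Nat.add_comm]
    rw [h1, Finset.sum_map]
    exact Finset.sum_congr rfl (fun j hj => by simp [addLeftEmbedding])
  -- window facts
  have hjs2 : 2 ≤ js := by
    rw [hjs]
    have : 1 ≤ ⌈β * m / 8⌉₊ := Nat.one_le_ceil_iff.mpr (by positivity)
    omega
  have hjfm : jf - 1 ≤ m := by
    rw [hjf]
    have : ⌊(1 - β / 8) * m⌋₊ ≤ m := Nat.floor_le_of_le (by nlinarith)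
    omega
  have hjsR : (js:ℝ) ≤ β * m / 8 + 2 := by
    rw [hjs]; push_cast
    have := Nat.ceil_lt_add_one (show (0:ℝ) ≤ β * m / 8 by positivity)
    linarith
  have hjfR : (1 - β/8) * m ≤ (jf:ℝ) := by
    rw [hjf]; push_cast
    exact (Nat.lt_floor_add_one _).le
  have hjsjf : js + 1 ≤ jf := by
    have h : (js:ℝ) + 1 ≤ (jf:ℝ) := by nlinarith
    exact_mod_cast h
  set I : Finset ℕ := Finset.Icc js (jf - 1) with hI
  have hI1 : I ⊆ Finset.Icc 1 m := by
    intro x hx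
    simp only [hI, Finset.mem_Icc] at *
    omega
  have hI2 : I ⊆ Finset.Icc 2 (m+1) := by
    intro x hx
    simp only [hI, Finset.mem_Icc] at *
    omega
  have hcard2 : (Finset.Icc 2 (m+1)).card = m := by rw [Nat.card_Icc]; omega
  have hcardI : I.card = jf - js := by rw [hI, Nat.card_Icc]; omega
  have hkm : jf - js ≤ m := by omega
  have hkR : ((jf - js : ℕ):ℝ) = (jf:ℝ) - js := by
    have : js ≤ jf := by omega
    push_cast [this]; ring
  -- pointwise bound on the window
  have b3 : (I.card : ℝ) * (-(β/2)) ≤ ∑ j ∈ I, (acc j - lam' j) := by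
    have h := Finset.card_nsmul_le_sum I (fun j => acc j - lam' j) (-(β/2)) (by
      intro j hj
      have h1 := hi j hj
      have hj2 : j ∈ Finset.Icc js jf := by
        simp only [hI, Finset.mem_Icc] at *
        omega
      have h2 := (abs_le.mp (hii j hj2)).2
      linarith)
    rwa [nsmul_eq_mul] at h
  have b1 : 0 ≤ ∑ j ∈ Finset.Icc 1 m \ I, acc j :=
    Finset.sum_nonneg (fun j hj => (hacc j (Finset.mem_sdiff.mp hj).1).1)
  have b2 : ∑ j ∈ Finset.Icc 2 (m+1) \ I, lam' j ≤ (((Finset.Icc 2 (m+1)) \ I).card : ℝ) := by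
    have h := Finset.sum_le_card_nsmul ((Finset.Icc 2 (m+1)) \ I) lam' 1
      (fun j hj => (hlam' j (Finset.mem_sdiff.mp hj).1).2)
    rwa [nsmul_eq_mul, mul_one] at h
  have hcardd : (((Finset.Icc 2 (m+1)) \ I).card : ℝ) = (m:ℝ) - ((jf:ℝ) - js) := by
    rw [Finset.card_sdiff_of_subset hI2, hcard2, hcardI]
    push_cast [hkm, hkR]
    ring
  have hsplit1 : ∑ j ∈ Finset.Icc 1 m, acc j
      = ∑ j ∈ Finset.Icc 1 m \ I, acc j + ∑ j ∈ I, acc j := (Finset.sum_sdiff hI1).symm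
  have hsplit2 : ∑ j ∈ Finset.Icc 2 (m+1), lam' j
      = ∑ j ∈ Finset.Icc 2 (m+1) \ I, lam' j + ∑ j ∈ I, lam' j := (Finset.sum_sdiff hI2).symm
  -- lower bound on the sum of gaps
  have hS : 13 * (β * m) / 60 ≤ ∑ j ∈ Finset.Icc 2 (m+1), (φ j - lam' j) := by
    have e1 : ∑ j ∈ Finset.Icc 2 (m+1), (φ j - acc (j-1))
        = ∑ j ∈ Finset.Icc 2 (m+1), φ j - ∑ j ∈ Finset.Icc 1 m, acc j := by
      rw [Finset.sum_sub_distrib, hre]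
    have e2 : ∑ j ∈ Finset.Icc 2 (m+1), (φ j - lam' j)
        = ∑ j ∈ Finset.Icc 2 (m+1), φ j - ∑ j ∈ Finset.Icc 2 (m+1), lam' j :=
      Finset.sum_sub_distrib _ _
    have eI : ∑ j ∈ I, (acc j - lam' j) = ∑ j ∈ I, acc j - ∑ j ∈ I, lam' j :=
      Finset.sum_sub_distrib _ _
    have hkI : (I.card : ℝ) = (jf:ℝ) - js := by rw [hcardI, hkR]
    have hkub : (jf:ℝ) - js ≤ m := by rw [← hkR]; exact_mod_cast hkm
    have hklb : (0:ℝ) ≤ (jf:ℝ) - js := by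
      have : js ≤ jf := by omega
      have := Nat.cast_le (α := ℝ).mpr this
      linarith
    rw [e1] at hgain
    rw [e2]
    rw [hkI] at b3
    rw [eI] at b3
    rw [hcardd] at b2
    -- m - (jf - js) ≤ β m / 4 + 2 and 2 ≤ β m / 30
    linarith [hsplit1, hsplit2, hjsR, hjfR, mul_le_mul_of_nonneg_right hkub hβ0.le]
  -- Cauchy–Schwarz
  have hcs : (∑ j ∈ Finset.Icc 2 (m+1), (φ j - lam' j))^2
      ≤ (m:ℝ) * ∑ j ∈ Finset.Icc 2 (m+1), (φ j - lam' j)^2 := by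
    have h := sq_sum_le_card_mul_sum_sq (s := Finset.Icc 2 (m+1)) (f := fun j => φ j - lam' j)
    rw [hcard2] at h
    exact h
  have hSpos : (0:ℝ) ≤ 13 * (β * m) / 60 := by positivity
  have hgoal : (n : ℝ) * β ^ 2 / (25 * b) = (m:ℝ) * β ^ 2 / 25 := by
    rw [hnm]; field_simp
  rw [hgoal]
  obtain ⟨X, hX⟩ : ∃ X, ∑ j ∈ Finset.Icc 2 (m+1), (φ j - lam' j) = X := ⟨_, rfl⟩
  obtain ⟨Y, hY⟩ : ∃ Y, ∑ j ∈ Finset.Icc 2 (m+1), (φ j - lam' j)^2 = Y := ⟨_, rfl⟩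
  rw [hX] at hcs hS
  rw [hY] at hcs ⊢
  have hsq : (13 * (β * m) / 60)^2 ≤ X^2 := pow_le_pow_left₀ hSpos hS 2
  have hfin : (m:ℝ) * ((m:ℝ) * β ^ 2 / 25) ≤ (m:ℝ) * Y := by
    nlinarith [hcs, hsq, sq_nonneg (β * (m:ℝ))]
  exact le_of_mul_le_mul_left hfin hmpos
end

section
/- Let n and b be positive integers with b dividing n, set m = n/b, let ε > 0 and let β be a real number. Let λ_j, λ''_j, acc_j ∈ [0,1] for j ∈ {1,…,m}, λ'_j ∈ [0,1] for j ∈ {1,…,m}, and φ_j ∈ [0,1] for j ∈ {2,…,m+1}. Assume: (a) λ_j ≥ 1 - ε for every j ∈ {1,…,m}; (b) n·λ_j = (j-1)·b·λ'_j + (n - (j-1)·b)·λ''_j for every j ∈ {1,…,m}; (c) acc_j ≥ λ''_j - β/4 for every j ∈ {1,…,m}; (d) β < (b/n)·Σ_{j=2}^{m+1} (φ_j - acc_{j-1}). Then β ≤ (4/3)·ε·(1 + ln(n/b)). -/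
/-- Deterministic core of the claim of Section 3.1 of the paper: if the
overall accuracy exceeds `1 - ε` throughout an epoch, then the local-progress
parameter `β` satisfies `β ≤ (4/3)·ε·(1 + ln(n/b))`. -/
theorem beta_eps_connection (n b : ℕ) (hn : 0 < n) (hb : 0 < b) (hdvd : b ∣ n)
    (m : ℕ) (hm : m = n / b) (ε : ℝ) (hε : 0 < ε) (β : ℝ)
    (lam lam'' acc lam' : ℕ → ℝ) (φ : ℕ → ℝ)
    (hlam : ∀ j ∈ Finset.Icc 1 m, lam j ∈ Set.Icc (0 : ℝ) 1)
    (hlam'' : ∀ j ∈ Finset.Icc 1 m, lam'' j ∈ Set.Icc (0 : ℝ) 1)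
    (hacc : ∀ j ∈ Finset.Icc 1 m, acc j ∈ Set.Icc (0 : ℝ) 1)
    (hlam' : ∀ j ∈ Finset.Icc 1 m, lam' j ∈ Set.Icc (0 : ℝ) 1)
    (hφ : ∀ j ∈ Finset.Icc 2 (m + 1), φ j ∈ Set.Icc (0 : ℝ) 1)
    (ha : ∀ j ∈ Finset.Icc 1 m, 1 - ε ≤ lam j)
    (hb' : ∀ j ∈ Finset.Icc 1 m,
      (n : ℝ) * lam j = ((j : ℝ) - 1) * b * lam' j + ((n : ℝ) - ((j : ℝ) - 1) * b) * lam'' j)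
    (hc : ∀ j ∈ Finset.Icc 1 m, lam'' j - β / 4 ≤ acc j)
    (hd : β < ((b : ℝ) / n) * ∑ j ∈ Finset.Icc 2 (m + 1), (φ j - acc (j - 1))) :
    β ≤ (4 / 3) * ε * (1 + Real.log ((n : ℝ) / b)) := by
  have hmb : b * m = n := by subst hm; exact Nat.mul_div_cancel' hdvd
  have hbR : (0:ℝ) < b := by exact_mod_cast hb
  have hnR : (0:ℝ) < n := by exact_mod_cast hn
  have hmbR : (b:ℝ) * m = n := by exact_mod_cast hmb
  have hm1 : 1 ≤ m := by
    rcases Nat.eq_zero_or_pos m with h | h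
    · subst h; simp at hmb; omega
    · exact h
  -- pointwise bound: 1 - lam'' j ≤ ε * n / ((m - j + 1) * b)
  have hkey : ∀ j ∈ Finset.Icc 1 m, 1 - lam'' j ≤ ε * n / (((m:ℝ) - j + 1) * b) := by
    intro j hj
    simp only [Finset.mem_Icc] at hj
    have hj1 : (1:ℝ) ≤ j := by exact_mod_cast hj.1
    have hjm : (j:ℝ) ≤ m := by exact_mod_cast hj.2
    have hD : ((m:ℝ) - j + 1) * b = (n:ℝ) - ((j:ℝ) - 1) * b := by
      rw [← hmbR]; ring
    have hDpos : (0:ℝ) < ((m:ℝ) - j + 1) * b := by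
      apply mul_pos _ hbR; linarith
    rw [le_div_iff₀ hDpos, hD]
    have h1 := hb' j (Finset.mem_Icc.mpr hj)
    have h2 := (hlam' j (Finset.mem_Icc.mpr hj)).2
    have h3 := ha j (Finset.mem_Icc.mpr hj)
    have h4 : ((j:ℝ) - 1) * b * lam' j ≤ ((j:ℝ) - 1) * b := by
      nlinarith [mul_nonneg (by linarith : (0:ℝ) ≤ (j:ℝ) - 1) hbR.le]
    nlinarith
  -- reindex the sum in hd
  have hre : ∑ j ∈ Finset.Icc 2 (m+1), (φ j - acc (j - 1))
      = ∑ j ∈ Finset.Icc 1 m, (φ (j+1) - acc j) := by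
    refine (Finset.sum_nbij' (i := fun j => j - 1) (j := fun j => j + 1) ?_ ?_ ?_ ?_ ?_).symm.symm
    all_goals intro a ha'
    all_goals simp only [Finset.mem_Icc] at *
    · omega
    · omega
    · omega
    · omega
    · rw [show a - 1 + 1 = a from by omega]
  -- bound each summand
  have hterm : ∀ j ∈ Finset.Icc 1 m, φ (j+1) - acc j ≤ (1 - lam'' j) + β / 4 := by
    intro j hj
    have h1 : φ (j+1) ≤ 1 := by
      have := hφ (j+1) (by simp only [Finset.mem_Icc] at *; omega)
      exact this.2
    have h2 := hc j hj
    linarith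
  -- sum bound
  have hsum : ∑ j ∈ Finset.Icc 1 m, (φ (j+1) - acc j)
      ≤ (∑ j ∈ Finset.Icc 1 m, ε * n / (((m:ℝ) - j + 1) * b)) + m * (β / 4) := by
    calc ∑ j ∈ Finset.Icc 1 m, (φ (j+1) - acc j)
        ≤ ∑ j ∈ Finset.Icc 1 m, ((1 - lam'' j) + β / 4) := Finset.sum_le_sum hterm
      _ = (∑ j ∈ Finset.Icc 1 m, (1 - lam'' j)) + m * (β / 4) := by
          rw [Finset.sum_add_distrib, Finset.sum_const, Nat.card_Icc]
          simp [nsmul_eq_mul]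
      _ ≤ (∑ j ∈ Finset.Icc 1 m, ε * n / (((m:ℝ) - j + 1) * b)) + m * (β / 4) := by
          gcongr with j hj
          · exact hkey j hj
  -- reflect the harmonic-like sum
  have hrefl : ∑ j ∈ Finset.Icc 1 m, ε * n / (((m:ℝ) - j + 1) * b)
      = ∑ k ∈ Finset.Icc 1 m, ε * n / ((k:ℝ) * b) := by
    refine Finset.sum_nbij' (i := fun j => m + 1 - j) (j := fun k => m + 1 - k) ?_ ?_ ?_ ?_ ?_
    all_goals intro a ha'
    all_goals simp only [Finset.mem_Icc] at *
    · omega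
    · omega
    · omega
    · omega
    · have : ((m + 1 - a : ℕ) : ℝ) = (m:ℝ) - a + 1 := by
        have : a ≤ m + 1 := by omega
        push_cast [Nat.cast_sub this]; ring
      rw [this]
  -- identify with harmonic number
  have hharm : ∑ k ∈ Finset.Icc 1 m, ε * n / ((k:ℝ) * b)
      = ε * (n / b) * (harmonic m : ℝ) := by
    rw [harmonic_eq_sum_Icc]
    push_cast
    rw [Finset.mul_sum]
    apply Finset.sum_congr rfl
    intro k hk
    simp only [Finset.mem_Icc] at hk
    have hk0 : (0:ℝ) < k := by exact_mod_cast hk.1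
    field_simp
  have hlog : Real.log ((n:ℝ) / b) = Real.log m := by
    rw [show (n:ℝ) / b = m by field_simp [← hmbR]; linarith [hmbR]]
  have hH : (harmonic m : ℝ) ≤ 1 + Real.log m := harmonic_le_one_add_log m
  -- put it together
  have hmain : β < ε * (harmonic m : ℝ) + β / 4 := by
    have hbn : (b:ℝ) / n * (m * (β / 4)) = β / 4 := by
      field_simp [← hmbR]; rw [hmbR]
    have h1 : ((b:ℝ)/n) * ∑ j ∈ Finset.Icc 2 (m+1), (φ j - acc (j - 1))
        ≤ ((b:ℝ)/n) * ((∑ k ∈ Finset.Icc 1 m, ε * n / ((k:ℝ) * b)) + m * (β / 4)) := by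
      apply mul_le_mul_of_nonneg_left _ (by positivity)
      rw [hre, ← hrefl]; exact hsum
    have h2 : ((b:ℝ)/n) * ((∑ k ∈ Finset.Icc 1 m, ε * n / ((k:ℝ) * b)) + m * (β / 4))
        = ε * (harmonic m : ℝ) + β / 4 := by
      rw [hharm, mul_add, hbn]
      field_simp
    linarith [hd, h1.trans_eq h2]
  have hHnn : (0:ℝ) ≤ (harmonic m : ℝ) := by
    have := harmonic_pos (n := m) (by omega); positivity
  rw [hlog]
  nlinarith
end
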